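/- Let ξ and η be invariant random measures on ℝ and set S₁(ω) := 1 + ξ^d(ω,[0,1)) + η^d(ω,[0,1)). Then the pair (θ_{S₁}ξ*, θ_{S₁}η*) := (ξ*(· + S₁), η*(· + S₁)) has the same distribution under P as (ξ*, η*); that is, for every measurable f : M(ℝ) × M(ℝ) → [0,∞], E f(θ_{S₁}ξ*, θ_{S₁}η*) = E f(ξ*, η*). -/

import Mathlib

open MeasureTheory

/-- The purely atomic part `μ^d` of a measure on `ℝ`. -/
noncomputable def atomicPart (μ : Measure ℝ) : Measure ℝ :=
  μ.restrict {t : ℝ | μ {t} ≠ 0}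

/-- The diffuse part `μ^c` of a measure on `ℝ`. -/
noncomputable def diffusePart (μ : Measure ℝ) : Measure ℝ :=
  μ.restrict {t : ℝ | μ {t} = 0}

/-- The time change `ζ`. -/
noncomputable def zeta (ξ η : Measure ℝ) (s : ℝ) : ℝ :=
  if 0 ≤ s then
    s + (atomicPart ξ (Set.Ico 0 s)).toReal + (atomicPart η (Set.Ico 0 s)).toReal
  else
    s - (atomicPart ξ (Set.Ico s 0)).toReal - (atomicPart η (Set.Ico s 0)).toReal

/-- The stretched measure `μ*` built from `μ` using the time change `ζ` of `(ξ, η)`. -/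
noncomputable def starM (ξ η μ : Measure ℝ) : Measure ℝ :=
  (diffusePart μ).map (zeta ξ η) +
    (atomicPart μ).bind fun t =>
      (μ {t})⁻¹ • volume.restrict (Set.Icc (zeta ξ η t) (zeta ξ η t + (μ {t}).toReal))

/-- The shift `θ_s μ := μ(· + s)` of a measure on `ℝ`. -/
noncomputable def shiftM (s : ℝ) (μ : Measure ℝ) : Measure ℝ :=
  μ.map fun x => x - s

/-- `S₁ := 1 + ξ^d[0,1) + η^d[0,1)`. -/
noncomputable def Sone (ξ η : Measure ℝ) : ℝ :=
  1 + (atomicPart ξ (Set.Ico 0 1)).toReal + (atomicPart η (Set.Ico 0 1)).toReal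

/-! Shifting `ξ`, `η` and the stretched measure `μ` by `c` turns the time change into
`s ↦ ζ (s + c) - ζ c`, so `μ*` is shifted by `ζ c`, and `S₁ = ζ 1`. By invariance `ξ ∘ θ₁` and
`η ∘ θ₁` are the shifts by `1` of `ξ` and `η`, hence `θ_{S₁} (ξ*, η*) = (ξ*, η*) ∘ θ₁`, and the
claim is the stationarity of `P` under `θ₁`. -/

open Set

section Shift

variable (c : ℝ) (μ : Measure ℝ)

lemma shiftM_add (ν : Measure ℝ) : shiftM c (μ + ν) = shiftM c μ + shiftM c ν :=
  Measure.map_add μ ν (measurable_sub_const c)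

lemma shiftM_apply (s : Set ℝ) : shiftM c μ s = μ ((· - c) ⁻¹' s) :=
  MeasurableEquiv.map_apply (MeasurableEquiv.subRight c) s

lemma shiftM_singleton (t : ℝ) : shiftM c μ {t} = μ {t + c} := by
  rw [shiftM_apply]
  congr 1
  ext x
  simp [sub_eq_iff_eq_add]

lemma shiftM_Ico (a b : ℝ) : shiftM c μ (Ico a b) = μ (Ico (a + c) (b + c)) := by
  rw [shiftM_apply, preimage_sub_const_Ico]

lemma restrict_shiftM (s : Set ℝ) :
    (shiftM c μ).restrict s = shiftM c (μ.restrict ((· - c) ⁻¹' s)) :=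
  MeasurableEquiv.restrict_map (MeasurableEquiv.subRight c) μ s

lemma lintegral_shiftM (f : ℝ → ENNReal) : ∫⁻ t, f t ∂shiftM c μ = ∫⁻ t, f (t - c) ∂μ :=
  lintegral_map_equiv f (MeasurableEquiv.subRight c)

lemma shiftM_volume_restrict_Icc (a b : ℝ) :
    shiftM c (volume.restrict (Icc a b)) = volume.restrict (Icc (a - c) (b - c)) := by
  have hpre : (· - c) ⁻¹' Icc (a - c) (b - c) = Icc a b := by
    simp [preimage_sub_const_Icc]
  rw [← hpre, ← restrict_shiftM, shiftM, map_sub_right_eq_self]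

lemma atomicPart_shiftM : atomicPart (shiftM c μ) = shiftM c (atomicPart μ) := by
  rw [atomicPart, restrict_shiftM, atomicPart]
  congr 3
  ext t
  simp [shiftM_singleton]

lemma diffusePart_shiftM : diffusePart (shiftM c μ) = shiftM c (diffusePart μ) := by
  rw [diffusePart, restrict_shiftM, diffusePart]
  congr 3
  ext t
  simp [shiftM_singleton]

instance sFinite_shiftM [SFinite μ] : SFinite (shiftM c μ) := by
  unfold shiftM
  infer_instance

end Shift

lemma countable_setOf_measure_singleton_ne_zero {α : Type*} [MeasurableSpace α]
    [MeasurableSingletonClass α] (μ : Measure α) [SFinite μ] :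
    {t : α | μ {t} ≠ 0}.Countable := by
  simpa only [pos_iff_ne_zero] using Measure.countable_meas_pos_of_disjoint_iUnion (μ := μ)
    (fun t => measurableSet_singleton t) (fun _ _ h => disjoint_singleton.2 h)

lemma Set.Countable.aemeasurable_restrict {α β : Type*} [MeasurableSpace α]
    [MeasurableSingletonClass α] [MeasurableSpace β] {s : Set α} (hs : s.Countable)
    (f : α → β) (μ : Measure α) : AEMeasurable f (μ.restrict s) := by
  have := hs.to_subtype
  rw [← iUnion_of_singleton_coe s, aemeasurable_iUnion_iff]
  intro ⟨t, _⟩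
  refine aemeasurable_const' ?_
  filter_upwards [ae_restrict_mem (measurableSet_singleton t)] with x hx
  filter_upwards [ae_restrict_mem (measurableSet_singleton t)] with y hy
  rw [mem_singleton_iff.1 hx, mem_singleton_iff.1 hy]

lemma aemeasurable_atomicPart {β : Type*} [MeasurableSpace β] (μ : Measure ℝ) [SFinite μ]
    (f : ℝ → β) : AEMeasurable f (atomicPart μ) :=
  (countable_setOf_measure_singleton_ne_zero μ).aemeasurable_restrict f μ

/-- The distribution function of `ν`, normalised to vanish at `0`. -/
noncomputable def signedMass (ν : Measure ℝ) (s : ℝ) : ℝ :=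
  if 0 ≤ s then (ν (Ico 0 s)).toReal else -(ν (Ico s 0)).toReal

section SignedMass

variable (ν : Measure ℝ) [IsLocallyFiniteMeasure ν]

lemma toReal_measure_Ico_add_Ico {a b c : ℝ} (hab : a ≤ b) (hbc : b ≤ c) :
    (ν (Ico a c)).toReal = (ν (Ico a b)).toReal + (ν (Ico b c)).toReal := by
  rw [← Ico_union_Ico_eq_Ico hab hbc, measure_union Ico_disjoint_Ico_same measurableSet_Ico,
    ENNReal.toReal_add measure_Ico_lt_top.ne measure_Ico_lt_top.ne]

lemma signedMass_sub_signedMass {a b : ℝ} (hab : a ≤ b) :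
    signedMass ν b - signedMass ν a = (ν (Ico a b)).toReal := by
  unfold signedMass
  rcases le_or_gt 0 a with ha | ha
  · rw [if_pos (ha.trans hab), if_pos ha, toReal_measure_Ico_add_Ico ν ha hab]
    ring
  rcases le_or_gt 0 b with hb | hb
  · rw [if_pos hb, if_neg ha.not_ge, toReal_measure_Ico_add_Ico ν ha.le hb]
    ring
  · rw [if_neg hb.not_ge, if_neg ha.not_ge, toReal_measure_Ico_add_Ico ν hab hb.le]
    ring

lemma monotone_signedMass : Monotone (signedMass ν) := fun _ _ hab =>
  sub_nonneg.1 ((signedMass_sub_signedMass ν hab).symm ▸ ENNReal.toReal_nonneg)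

lemma signedMass_shiftM (c s : ℝ) :
    signedMass (shiftM c ν) s = signedMass ν (s + c) - signedMass ν c := by
  rcases le_or_gt 0 s with hs | hs
  · rw [signedMass, if_pos hs, shiftM_Ico, zero_add,
      signedMass_sub_signedMass ν (le_add_of_nonneg_left hs)]
  · rw [signedMass, if_neg hs.not_ge, shiftM_Ico, zero_add,
      ← signedMass_sub_signedMass ν (add_le_of_nonpos_left hs.le), neg_sub]

end SignedMass

instance isLocallyFiniteMeasure_atomicPart (μ : Measure ℝ) [IsLocallyFiniteMeasure μ] :
    IsLocallyFiniteMeasure (atomicPart μ) := by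
  unfold atomicPart
  infer_instance

lemma zeta_eq (ξ η : Measure ℝ) (s : ℝ) :
    zeta ξ η s = s + signedMass (atomicPart ξ) s + signedMass (atomicPart η) s := by
  unfold zeta signedMass
  split_ifs <;> ring

lemma Sone_eq_zeta_one (ξ η : Measure ℝ) : Sone ξ η = zeta ξ η 1 := by
  simp [Sone, zeta]

section Zeta

variable (ξ η : Measure ℝ) [IsLocallyFiniteMeasure ξ] [IsLocallyFiniteMeasure η]

lemma monotone_zeta : Monotone (zeta ξ η) := by
  intro a b hab
  simp only [zeta_eq]
  gcongr
  · exact monotone_signedMass _ hab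
  · exact monotone_signedMass _ hab

lemma zeta_shiftM (c s : ℝ) :
    zeta (shiftM c ξ) (shiftM c η) s = zeta ξ η (s + c) - zeta ξ η c := by
  simp only [zeta_eq, atomicPart_shiftM, signedMass_shiftM]
  ring

end Zeta

noncomputable def atomKernel (ξ η μ : Measure ℝ) (t : ℝ) : Measure ℝ :=
  (μ {t})⁻¹ • volume.restrict (Icc (zeta ξ η t) (zeta ξ η t + (μ {t}).toReal))

lemma starM_eq (ξ η μ : Measure ℝ) :
    starM ξ η μ = (diffusePart μ).map (zeta ξ η) + (atomicPart μ).bind (atomKernel ξ η μ) :=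
  rfl

lemma bind_shiftM {m : Measure ℝ} {κ κ' : ℝ → Measure ℝ} {c d : ℝ} (hκ : AEMeasurable κ m)
    (hκ' : AEMeasurable κ' (shiftM c m)) (h : ∀ t, κ' (t - c) = shiftM d (κ t)) :
    (shiftM c m).bind κ' = shiftM d (m.bind κ) := by
  ext B hB
  rw [Measure.bind_apply hB hκ', lintegral_shiftM, shiftM_apply,
    Measure.bind_apply (measurable_sub_const d hB) hκ]
  simp_rw [h, shiftM_apply]

section StarShift

variable (ξ η : Measure ℝ) [IsLocallyFiniteMeasure ξ] [IsLocallyFiniteMeasure η] (c : ℝ)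

lemma map_zeta_shiftM (ν : Measure ℝ) :
    (shiftM c ν).map (zeta (shiftM c ξ) (shiftM c η)) = shiftM (zeta ξ η c) (ν.map (zeta ξ η)) := by
  have hζ := (monotone_zeta ξ η).measurable
  have hζ' : zeta (shiftM c ξ) (shiftM c η) = fun s => zeta ξ η (s + c) - zeta ξ η c :=
    funext (zeta_shiftM ξ η c)
  rw [hζ', shiftM, shiftM, Measure.map_map (by fun_prop) (measurable_sub_const c),
    Measure.map_map (measurable_sub_const _) hζ]
  congr 1
  funext s
  simp

lemma atomKernel_shiftM (μ : Measure ℝ) (t : ℝ) :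
    atomKernel (shiftM c ξ) (shiftM c η) (shiftM c μ) (t - c)
      = shiftM (zeta ξ η c) (atomKernel ξ η μ t) := by
  rw [atomKernel, atomKernel, shiftM_singleton, sub_add_cancel, zeta_shiftM, sub_add_cancel,
    shiftM, Measure.map_smul, ← shiftM, shiftM_volume_restrict_Icc, sub_add_eq_add_sub]

theorem starM_shiftM (μ : Measure ℝ) [SFinite μ] :
    starM (shiftM c ξ) (shiftM c η) (shiftM c μ) = shiftM (zeta ξ η c) (starM ξ η μ) := by
  -- `atomKernel` need not be measurable, but `atomicPart` only charges countably many points.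
  have hκ' : AEMeasurable (atomKernel (shiftM c ξ) (shiftM c η) (shiftM c μ))
      (shiftM c (atomicPart μ)) := by
    rw [← atomicPart_shiftM]
    exact aemeasurable_atomicPart _ _
  rw [starM_eq, starM_eq, shiftM_add, diffusePart_shiftM, map_zeta_shiftM, atomicPart_shiftM,
    bind_shiftM (aemeasurable_atomicPart μ _) hκ' (atomKernel_shiftM ξ η c μ)]

end StarShift

lemma measurableEmbedding_flow {Ω : Type*} [MeasurableSpace Ω] {θ : ℝ → Ω → Ω}
    (hmeas : ∀ s, Measurable (θ s)) (hzero : ∀ ω, θ 0 ω = ω)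
    (hadd : ∀ s t : ℝ, ∀ ω, θ s (θ t ω) = θ (s + t) ω) (s : ℝ) : MeasurableEmbedding (θ s) := by
  have hsurj : Function.Surjective (θ s) := fun ω =>
    ⟨θ (-s) ω, by rw [hadd, add_neg_cancel, hzero]⟩
  refine .of_measurable_inverse (hmeas s) ?_ (hmeas (-s)) fun ω => ?_
  · rw [hsurj.range_eq]
    exact MeasurableSet.univ
  · rw [hadd, neg_add_cancel, hzero]

theorem star_pair_shift_Sone_eq_distrib_general
    { Omega : Type*} [MeasurableSpace Omega] (P : Measure Omega)
    (θ : ℝ → Omega → Omega)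
    (hθmeas : Measurable fun p : Omega × ℝ => θ p.2 p.1)
    (hθzero : ∀ ω, θ 0 ω = ω)
    (hθadd : ∀ s t : ℝ, ∀ ω, θ s (θ t ω) = θ (s + t) ω)
    (hstat : ∀ s : ℝ, P.map (θ s) = P)
    (ξ η : Omega → Measure ℝ)
    (hξloc : ∀ᵐ ω ∂P, ∀ C : Set ℝ, IsCompact C → ξ ω C < ⊤)
    (hηloc : ∀ᵐ ω ∂P, ∀ C : Set ℝ, IsCompact C → η ω C < ⊤)
    (hξinv : ∀ᵐ ω ∂P, ∀ t : ℝ, ξ (θ t ω) = (ξ ω).map fun x => x - t)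
    (hηinv : ∀ᵐ ω ∂P, ∀ t : ℝ, η (θ t ω) = (η ω).map fun x => x - t) :
    ∀ f : Measure ℝ × Measure ℝ → ENNReal, Measurable f →
      ∫⁻ ω, f (shiftM (Sone (ξ ω) (η ω)) (starM (ξ ω) (η ω) (ξ ω)),
               shiftM (Sone (ξ ω) (η ω)) (starM (ξ ω) (η ω) (η ω))) ∂P
        = ∫⁻ ω, f (starM (ξ ω) (η ω) (ξ ω), starM (ξ ω) (η ω) (η ω)) ∂P := by
  intro f _
  have hθs : ∀ s, Measurable (θ s) := fun s => hθmeas.comp (measurable_id.prodMk measurable_const)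
  have hθ1 : MeasurePreserving (θ 1) P P := ⟨hθs 1, hstat 1⟩
  refine (lintegral_congr_ae ?_).trans
    (hθ1.lintegral_comp_emb (measurableEmbedding_flow hθs hθzero hθadd 1) _)
  filter_upwards [hξloc, hηloc, hξinv, hηinv] with ω hξω hηω hξθ hηθ
  have : IsFiniteMeasureOnCompacts (ξ ω) := ⟨hξω⟩
  have : IsFiniteMeasureOnCompacts (η ω) := ⟨hηω⟩
  rw [hξθ 1, hηθ 1, ← shiftM, ← shiftM, starM_shiftM, starM_shiftM, Sone_eq_zeta_one]

/-- For invariant random measures `ξ`, `η`, the pair `θ_{S₁}(ξ*, η*)` has the same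
distribution under `P` as `(ξ*, η*)`. -/
theorem star_pair_shift_Sone_eq_distrib
    { Omega : Type*} [MeasurableSpace Omega] (P : Measure Omega) [SigmaFinite P]
    (θ : ℝ → Omega → Omega)
    (hθmeas : Measurable fun p : Omega × ℝ => θ p.2 p.1)
    (hθzero : ∀ ω, θ 0 ω = ω)
    (hθadd : ∀ s t : ℝ, ∀ ω, θ s (θ t ω) = θ (s + t) ω)
    (hstat : ∀ s : ℝ, P.map (θ s) = P)
    (herg : ∀ A : Set Omega, MeasurableSet A → (∀ s : ℝ, θ s '' A = A) → P A = 0 ∨ P Aᶜ = 0)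
    (ξ η : Omega → Measure ℝ) (hξmeas : Measurable ξ) (hηmeas : Measurable η)
    (hξloc : ∀ᵐ ω ∂P, ∀ C : Set ℝ, IsCompact C → ξ ω C < ⊤)
    (hηloc : ∀ᵐ ω ∂P, ∀ C : Set ℝ, IsCompact C → η ω C < ⊤)
    (hξinv : ∀ᵐ ω ∂P, ∀ t : ℝ, ξ (θ t ω) = (ξ ω).map fun x => x - t)
    (hηinv : ∀ᵐ ω ∂P, ∀ t : ℝ, η (θ t ω) = (η ω).map fun x => x - t) :
    ∀ f : Measure ℝ × Measure ℝ → ENNReal, Measurable f →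
      ∫⁻ ω, f (shiftM (Sone (ξ ω) (η ω)) (starM (ξ ω) (η ω) (ξ ω)),
               shiftM (Sone (ξ ω) (η ω)) (starM (ξ ω) (η ω) (η ω))) ∂P
        = ∫⁻ ω, f (starM (ξ ω) (η ω) (ξ ω), starM (ξ ω) (η ω) (η ω)) ∂P :=
  star_pair_shift_Sone_eq_distrib_general P θ hθmeas hθzero hθadd hstat ξ η hξloc hηloc hξinv hηinv
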